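/- (Ball counts in leveled switch graphs.) Let (V, s₀, s₁) be a switch graph with a level function ℓ : V → ℕ such that for every non-absorbing vertex v one has ℓ(s₀(v)) = ℓ(s₁(v)) = ℓ(v) + 1. Let s ∈ V with ℓ(s) = 0, let m ≥ 0, and run the Digicomp process releasing 2^m balls from s. Then every ball terminates, each ball enters each vertex at most once, and for every vertex v with ℓ(v) ≤ m, the number of balls that enter v equals 2^(m − ℓ(v)) · N(v), where N(v) is the number of functions b : {0, 1, …, ℓ(v)−1} → {0, 1} such that the sequence v₀ = s, v_{j+1} = s_{b(j)}(v_j) satisfies v_{ℓ(v)} = v. -/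

import Mathlib

open scoped Classical

variable {V : Type*}

/-- One step of the train: move along the edge given by the current switch state
and toggle the switch at the current vertex. -/
def step [DecidableEq V] (s0 s1 : V → V) (c : V × (V → Bool)) : V × (V → Bool) :=
  (if c.2 c.1 then s1 c.1 else s0 c.1, Function.update c.2 c.1 (!c.2 c.1))

/-- A vertex is absorbing if both of its out-edges are self-loops. -/
def Absorbing (s0 s1 : V → V) (v : V) : Prop := s0 v = v ∧ s1 v = v

/-- The step map of a ball: it stops (configuration frozen, no toggle) at an absorbing
vertex, and otherwise moves by the step map. -/
def stepD [DecidableEq V] (s0 s1 : V → V) (c : V × (V → Bool)) : V × (V → Bool) :=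
  if s0 c.1 = c.1 ∧ s1 c.1 = c.1 then c else step s0 s1 c

/-- The switch assignment left behind by one ball released at `st` with initial
assignment `σ`: the assignment when the ball first reaches an absorbing vertex
(junk value `σ` if it never does). -/
noncomputable def ballFinal [DecidableEq V] (s0 s1 : V → V) (st : V) (σ : V → Bool) :
    V → Bool :=
  if h : ∃ k, Absorbing s0 s1 ((stepD s0 s1)^[k] (st, σ)).1 then
    ((stepD s0 s1)^[Nat.find h] (st, σ)).2
  else σ

/-- The switch assignment after `i` balls have been released sequentially from `st`
(the first ball sees all switches `0`). -/
noncomputable def sigmaAfter [DecidableEq V] (s0 s1 : V → V) (st : V) :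
    ℕ → (V → Bool)
  | 0 => fun _ => false
  | i + 1 => ballFinal s0 s1 st (sigmaAfter s0 s1 st i)

/-- The configuration of the `i`-th ball (0-indexed) after `k` of its own steps. -/
noncomputable def ballConfig [DecidableEq V] (s0 s1 : V → V) (st : V) (i k : ℕ) :
    V × (V → Bool) :=
  (stepD s0 s1)^[k] (st, sigmaAfter s0 s1 st i)

/-- The walk from `st` determined by the branch choices `b`. -/
def walk (s0 s1 : V → V) (st : V) (b : ℕ → Bool) : ℕ → V
  | 0 => st
  | j + 1 => (if b j then s1 else s0) (walk s0 s1 st b j)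

/-- `N(v)`: the number of branch sequences `b : Fin L → Bool` whose walk from `st`
ends at `v` after `L` steps. -/
noncomputable def branchCount [DecidableEq V] (s0 s1 : V → V) (st : V) (L : ℕ)
    (v : V) : ℕ :=
  ((Finset.univ : Finset (Fin L → Bool)).filter
    (fun b => walk s0 s1 st (fun j => if h : j < L then b ⟨j, h⟩ else false) L = v)).card


section Aux

variable [DecidableEq V] (s0 s1 : V → V)

lemma stepD_of_abs {c : V × (V → Bool)} (h : Absorbing s0 s1 c.1) :
    stepD s0 s1 c = c := by
  unfold Absorbing at h; rw [stepD, if_pos h]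

lemma stepD_of_not_abs {c : V × (V → Bool)} (h : ¬ Absorbing s0 s1 c.1) :
    stepD s0 s1 c = step s0 s1 c := by
  unfold Absorbing at h; rw [stepD, if_neg h]

lemma iter_stable {c : V × (V → Bool)} {k l : ℕ}
    (hk : Absorbing s0 s1 ((stepD s0 s1)^[k] c).1) (hkl : k ≤ l) :
    (stepD s0 s1)^[l] c = (stepD s0 s1)^[k] c := by
  induction l, hkl using Nat.le_induction with
  | base => rfl
  | succ l hl ih =>
      rw [Function.iterate_succ_apply', ih, stepD_of_abs s0 s1 hk]

variable (ℓ : V → ℕ)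
variable (hlev : ∀ v, ¬ Absorbing s0 s1 v → ℓ (s0 v) = ℓ v + 1 ∧ ℓ (s1 v) = ℓ v + 1)

include hlev

lemma level_stepD {c : V × (V → Bool)} (h : ¬ Absorbing s0 s1 c.1) :
    ℓ ((stepD s0 s1 c).1) = ℓ c.1 + 1 := by
  rw [stepD_of_not_abs s0 s1 h]
  show ℓ (if c.2 c.1 then s1 c.1 else s0 c.1) = _
  rcases hlev c.1 h with ⟨h0, h1⟩
  cases c.2 c.1 <;> simp [h0, h1]

lemma level_run (c : V × (V → Bool)) (k : ℕ)
    (h : ∀ j < k, ¬ Absorbing s0 s1 (((stepD s0 s1)^[j] c).1)) :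
    ℓ (((stepD s0 s1)^[k] c).1) = ℓ c.1 + k := by
  induction k with
  | zero => simp
  | succ k ih =>
      rw [Function.iterate_succ_apply',
        level_stepD s0 s1 ℓ hlev (h k (by omega)),
        ih (fun j hj => h j (by omega))]
      omega

variable [Fintype V]

lemma exists_abs (c : V × (V → Bool)) :
    ∃ k, Absorbing s0 s1 (((stepD s0 s1)^[k] c).1) := by
  by_contra h
  push_neg at h
  have hB : ∀ k : ℕ, ℓ c.1 + k ≤ Finset.univ.sup ℓ := by
    intro k
    rw [← level_run s0 s1 ℓ hlev c k (fun j _ => h j)]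
    exact Finset.le_sup (Finset.mem_univ _)
  have := hB (Finset.univ.sup ℓ + 1)
  omega

/-- absorption time -/
noncomputable def absT (c : V × (V → Bool)) : ℕ :=
  Nat.find (exists_abs s0 s1 ℓ hlev c)

lemma absT_spec (c : V × (V → Bool)) :
    Absorbing s0 s1 (((stepD s0 s1)^[absT s0 s1 ℓ hlev c] c).1) :=
  Nat.find_spec (exists_abs s0 s1 ℓ hlev c)

lemma absT_min {c : V × (V → Bool)} {j : ℕ} (hj : j < absT s0 s1 ℓ hlev c) :
    ¬ Absorbing s0 s1 (((stepD s0 s1)^[j] c).1) :=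
  Nat.find_min (exists_abs s0 s1 ℓ hlev c) hj

lemma iter_stable_T {c : V × (V → Bool)} {k : ℕ} (h : absT s0 s1 ℓ hlev c ≤ k) :
    (stepD s0 s1)^[k] c = (stepD s0 s1)^[absT s0 s1 ℓ hlev c] c :=
  iter_stable s0 s1 (absT_spec s0 s1 ℓ hlev c) h

lemma lt_absT_of_not_abs {c : V × (V → Bool)} {k : ℕ}
    (h : ¬ Absorbing s0 s1 (((stepD s0 s1)^[k] c).1)) :
    k < absT s0 s1 ℓ hlev c := by
  by_contra hk
  exact h (by rw [iter_stable_T s0 s1 ℓ hlev (by omega)]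
              exact absT_spec s0 s1 ℓ hlev c)

lemma level_iter (c : V × (V → Bool)) (k : ℕ) :
    ℓ (((stepD s0 s1)^[k] c).1) = ℓ c.1 + min k (absT s0 s1 ℓ hlev c) := by
  rcases le_or_gt k (absT s0 s1 ℓ hlev c) with h | h
  · rw [min_eq_left h]
    exact level_run s0 s1 ℓ hlev c k
      (fun j hj => absT_min s0 s1 ℓ hlev (by omega))
  · rw [min_eq_right (le_of_lt h), iter_stable_T s0 s1 ℓ hlev (le_of_lt h)]
    exact level_run s0 s1 ℓ hlev c _ (fun j hj => absT_min s0 s1 ℓ hlev hj)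

lemma pos_inj (c : V × (V → Bool)) {k1 k2 : ℕ} (h12 : k1 < k2)
    (he : ((stepD s0 s1)^[k1] c).1 = ((stepD s0 s1)^[k2] c).1) :
    Absorbing s0 s1 (((stepD s0 s1)^[k1] c).1) := by
  by_contra h
  have hT := lt_absT_of_not_abs s0 s1 ℓ hlev h
  have e1 := level_iter s0 s1 ℓ hlev c k1
  have e2 := level_iter s0 s1 ℓ hlev c k2
  rw [he, e2] at e1
  omega

lemma iter_snd (c : V × (V → Bool)) (u : V) (k : ℕ)
    (hk : k ≤ absT s0 s1 ℓ hlev c) :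
    ((stepD s0 s1)^[k] c).2 u =
      if (∃ j < k, ((stepD s0 s1)^[j] c).1 = u) then !(c.2 u) else c.2 u := by
  induction k with
  | zero => simp
  | succ k ih =>
      have hkT : k < absT s0 s1 ℓ hlev c := by omega
      have hna : ¬ Absorbing s0 s1 (((stepD s0 s1)^[k] c).1) :=
        absT_min s0 s1 ℓ hlev hkT
      rw [Function.iterate_succ_apply', stepD_of_not_abs s0 s1 hna]
      by_cases hu : ((stepD s0 s1)^[k] c).1 = u
      · have hold : ((stepD s0 s1)^[k] c).2 u = c.2 u := by
          rw [ih (by omega), if_neg]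
          rintro ⟨j, hj, hju⟩
          have := pos_inj s0 s1 ℓ hlev c hj (hju.trans hu.symm)
          exact absT_min s0 s1 ℓ hlev (by omega) this
        show Function.update _ _ _ u = _
        rw [if_pos ⟨k, by omega, hu⟩, ← hu, Function.update_self, hu, hold]
      · show Function.update _ _ _ u = _
        rw [Function.update_of_ne (by exact fun h => hu h.symm)]
        rw [ih (by omega)]
        congr 1
        simp only [eq_iff_iff]
        constructor
        · rintro ⟨j, hj, hju⟩; exact ⟨j, by omega, hju⟩
        · rintro ⟨j, hj, hju⟩
          refine ⟨j, by
            rcases Nat.lt_succ_iff_lt_or_eq.mp hj with h | h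
            · exact h
            · exact absurd (h ▸ hju) hu, hju⟩

lemma ballFinal_eq (st : V) (σ : V → Bool) (u : V) :
    ballFinal s0 s1 st σ u =
      if (∃ k, ((stepD s0 s1)^[k] (st, σ)).1 = u) ∧ ¬ Absorbing s0 s1 u then
        !(σ u) else σ u := by
  have hex := exists_abs s0 s1 ℓ hlev (st, σ)
  have hfind : Nat.find hex = absT s0 s1 ℓ hlev (st, σ) := rfl
  rw [ballFinal, dif_pos hex, hfind,
    iter_snd s0 s1 ℓ hlev (st, σ) u _ le_rfl]
  congr 1
  simp only [eq_iff_iff]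
  constructor
  · rintro ⟨j, hj, hju⟩
    exact ⟨⟨j, hju⟩, hju ▸ absT_min s0 s1 ℓ hlev hj⟩
  · rintro ⟨⟨k, hk⟩, hna⟩
    refine ⟨k, ?_, hk⟩
    exact lt_absT_of_not_abs s0 s1 ℓ hlev (hk ▸ hna)

lemma enters_iff (st : V) (σ : V → Bool) (hst : ℓ st = 0) (v : V) :
    (∃ k, ((stepD s0 s1)^[k] (st, σ)).1 = v) ↔
      ((stepD s0 s1)^[ℓ v] (st, σ)).1 = v := by
  constructor
  · rintro ⟨k, hk⟩
    have hv : ℓ v = min k (absT s0 s1 ℓ hlev (st, σ)) := by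
      have := level_iter s0 s1 ℓ hlev (st, σ) k
      rw [hk] at this; simpa [hst] using this
    rcases le_or_gt k (absT s0 s1 ℓ hlev (st, σ)) with h | h
    · rw [hv, min_eq_left h]; exact hk
    · rw [hv, min_eq_right (le_of_lt h), ← hk,
        iter_stable_T s0 s1 ℓ hlev (le_of_lt h)]
  · exact fun h => ⟨ℓ v, h⟩

end Aux


section Comb

lemma count_even_index (S : Finset ℕ) :
    (S.filter (fun i => Even ((S.filter (fun j => j < i)).card))).card
      = (S.card + 1) / 2 := by
  induction S using Finset.induction_on_max with
  | empty => simp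
  | insert a S ha ih =>
      have haS : a ∉ S := fun h => lt_irrefl a (ha a h)
      have hin : ∀ i ∈ S,
          ((insert a S).filter (fun j => j < i)).card
            = (S.filter (fun j => j < i)).card := by
        intro i hi
        rw [Finset.filter_insert, if_neg (by exact fun h => absurd (ha i hi) (by omega))]
      have hia : ((insert a S).filter (fun j => j < a)).card = S.card := by
        rw [Finset.filter_insert, if_neg (lt_irrefl a),
          Finset.filter_true_of_mem (fun x hx => ha x hx)]
      rw [Finset.filter_insert]
      have hSrw : S.filter (fun i => Even (((insert a S).filter (fun j => j < i)).card))
          = S.filter (fun i => Even ((S.filter (fun j => j < i)).card)) := by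
        apply Finset.filter_congr
        intro i hi
        rw [hin i hi]
      by_cases hev : Even (((insert a S).filter (fun j => j < a)).card)
      · rw [if_pos hev, Finset.card_insert_of_notMem
          (fun h => haS (Finset.mem_of_mem_filter a h)), hSrw, ih,
          Finset.card_insert_of_notMem haS]
        rw [hia] at hev
        rw [Nat.even_iff] at hev
        omega
      · rw [if_neg hev, hSrw, ih, Finset.card_insert_of_notMem haS]
        rw [hia] at hev
        rw [Nat.even_iff] at hev
        omega

lemma count_odd_index (S : Finset ℕ) :
    (S.filter (fun i => ¬ Even ((S.filter (fun j => j < i)).card))).card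
      = S.card - (S.card + 1) / 2 := by
  have h := count_even_index S
  have hsub : S.filter (fun i => Even ((S.filter (fun j => j < i)).card)) ⊆ S :=
    Finset.filter_subset _ _
  rw [Finset.filter_not, Finset.card_sdiff_of_subset hsub, h]

variable [DecidableEq V] (s0 s1 : V → V)

lemma walk_congr {st : V} {b1 b2 : ℕ → Bool} {k : ℕ} (h : ∀ j < k, b1 j = b2 j) :
    walk s0 s1 st b1 k = walk s0 s1 st b2 k := by
  induction k with
  | zero => rfl
  | succ k ih =>
      show (if b1 k then s1 else s0) _ = (if b2 k then s1 else s0) _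
      rw [h k (by omega), ih (fun j hj => h j (by omega))]

lemma branchCount_zero [Fintype V] (st v : V) :
    branchCount s0 s1 st 0 v = if st = v then 1 else 0 := by
  unfold branchCount
  have : ∀ b : Fin 0 → Bool,
      walk s0 s1 st (fun j => if h : j < 0 then b ⟨j, h⟩ else false) 0 = st := fun _ => rfl
  by_cases h : st = v
  · rw [Finset.filter_true_of_mem (fun b _ => by rw [this b]; exact h), if_pos h]
    simp
  · rw [Finset.filter_false_of_mem (fun b _ => by rw [this b]; exact h), if_neg h]
    simp

lemma branchCount_succ [Fintype V] (st v : V) (L : ℕ) :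
    branchCount s0 s1 st (L + 1) v =
      ∑ u : V, branchCount s0 s1 st L u *
        ((if s0 u = v then 1 else 0) + (if s1 u = v then 1 else 0)) := by
  classical
  set ext : (Fin L → Bool) → (ℕ → Bool) :=
    fun b j => if h : j < L then b ⟨j, h⟩ else false with hext
  set w : (Fin L → Bool) → V := fun b => walk s0 s1 st (ext b) L with hw
  set e : ((Fin L → Bool) × Bool) ≃ (Fin (L + 1) → Bool) :=
    { toFun := fun p => Fin.snoc p.1 p.2
      invFun := fun b => (Fin.init b, b (Fin.last L))
      left_inv := fun p => by simp
      right_inv := fun b => by simp } with he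
  have key : ∀ (b : Fin L → Bool) (c : Bool),
      walk s0 s1 st
        (fun j => if h : j < L + 1 then (Fin.snoc b c : Fin (L+1) → Bool) ⟨j, h⟩ else false)
        (L + 1)
        = (if c then s1 else s0) (w b) := by
    intro b c
    show (if _ then s1 else s0) _ = _
    have hlast : (if h : L < L + 1 then (Fin.snoc b c : Fin (L+1) → Bool) ⟨L, h⟩ else false)
        = c := by
      rw [dif_pos (by omega)]
      exact congrArg _ (rfl) |>.trans (by
        show (Fin.snoc b c : Fin (L+1) → Bool) (Fin.last L) = c
        simp)
    beta_reduce
    rw [hlast]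
    have hwc : walk s0 s1 st
        (fun j => if h : j < L + 1 then (Fin.snoc b c : Fin (L+1) → Bool) ⟨j, h⟩ else false) L
        = w b := by
      apply walk_congr
      intro j hj
      rw [dif_pos (show j < L + 1 by omega)]
      show (Fin.snoc b c : Fin (L+1) → Bool) (Fin.castSucc ⟨j, hj⟩) = ext b j
      rw [Fin.snoc_castSucc]
      simp [hext, hj]
    rw [hwc]
  -- LHS as a sum of indicators
  rw [branchCount, Finset.card_filter]
  rw [← Equiv.sum_comp e (fun b' => if walk s0 s1 st
      (fun j => if h : j < L + 1 then b' ⟨j, h⟩ else false) (L + 1) = v then 1 else 0)]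
  rw [Fintype.sum_prod_type]
  have hpt : ∀ b : Fin L → Bool,
      (∑ c : Bool, if walk s0 s1 st
        (fun j => if h : j < L + 1 then (e (b, c)) ⟨j, h⟩ else false) (L + 1) = v
        then 1 else 0)
      = ((if s0 (w b) = v then 1 else 0) + (if s1 (w b) = v then 1 else 0)) := by
    intro b
    rw [Fintype.sum_bool]
    have h1 := key b true
    have h2 := key b false
    show (if walk s0 s1 st
        (fun j => if h : j < L + 1 then (Fin.snoc b true : Fin (L+1) → Bool) ⟨j, h⟩ else false)
        (L + 1) = v then 1 else 0) +
      (if walk s0 s1 st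
        (fun j => if h : j < L + 1 then (Fin.snoc b false : Fin (L+1) → Bool) ⟨j, h⟩ else false)
        (L + 1) = v then 1 else 0) = _
    rw [h1, h2,
      show (if (true : Bool) = true then s1 else s0) = s1 from rfl,
      show (if (false : Bool) = true then s1 else s0) = s0 from rfl, add_comm]
  rw [Finset.sum_congr rfl (fun b _ => hpt b)]
  -- RHS : unfold branchCount and fiberwise sum
  have hrhs : ∀ u : V, branchCount s0 s1 st L u *
      ((if s0 u = v then 1 else 0) + (if s1 u = v then 1 else 0))
      = ∑ b ∈ Finset.univ.filter (fun b => w b = u),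
          ((if s0 (w b) = v then 1 else 0) + (if s1 (w b) = v then 1 else 0)) := by
    intro u
    rw [branchCount]
    have : Finset.univ.filter
        (fun b : Fin L → Bool => walk s0 s1 st (fun j => if h : j < L then b ⟨j, h⟩ else false) L = u)
        = Finset.univ.filter (fun b => w b = u) := rfl
    rw [this, Finset.sum_congr rfl (fun b hb => by
      rw [(Finset.mem_filter.mp hb).2]), Finset.sum_const, smul_eq_mul, mul_comm]
  rw [Finset.sum_congr rfl (fun u _ => hrhs u)]
  rw [Finset.sum_fiberwise_of_maps_to (fun b _ => Finset.mem_univ (w b))]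

end Comb


section Multi

variable [DecidableEq V] [Fintype V] (s0 s1 : V → V) (ℓ : V → ℕ)
variable (hlev : ∀ v, ¬ Absorbing s0 s1 v → ℓ (s0 v) = ℓ v + 1 ∧ ℓ (s1 v) = ℓ v + 1)
variable (s : V) (hs : ℓ s = 0)

include hlev hs

lemma walk_level (b : ℕ → Bool) (j : ℕ) :
    ℓ (walk s0 s1 s b j) = j ∨ Absorbing s0 s1 (walk s0 s1 s b j) := by
  induction j with
  | zero => exact Or.inl hs
  | succ j ih =>
      by_cases ha : Absorbing s0 s1 (walk s0 s1 s b j)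
      · right
        have heq : (if b j then s1 else s0) (walk s0 s1 s b j) = walk s0 s1 s b j := by
          cases b j <;> simp [ha.1, ha.2]
        show Absorbing s0 s1 ((if b j then s1 else s0) (walk s0 s1 s b j))
        rw [heq]; exact ha
      · left
        rcases ih with h | h
        · show ℓ ((if b j then s1 else s0) (walk s0 s1 s b j)) = j + 1
          rcases hlev _ ha with ⟨h0, h1⟩
          cases b j <;> simp [h0, h1, h]
        · exact absurd h ha

lemma walk_level_le (b : ℕ → Bool) (j : ℕ) : ℓ (walk s0 s1 s b j) ≤ j := by
  induction j with
  | zero => exact hs.le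
  | succ j ih =>
      by_cases ha : Absorbing s0 s1 (walk s0 s1 s b j)
      · have heq : (if b j then s1 else s0) (walk s0 s1 s b j) = walk s0 s1 s b j := by
          cases b j <;> simp [ha.1, ha.2]
        show ℓ ((if b j then s1 else s0) (walk s0 s1 s b j)) ≤ j + 1
        rw [heq]; omega
      · show ℓ ((if b j then s1 else s0) (walk s0 s1 s b j)) ≤ j + 1
        rcases hlev _ ha with ⟨h0, h1⟩
        cases b j <;> simp [h0, h1] <;> omega

lemma branchCount_level {L : ℕ} {u : V} (h : branchCount s0 s1 s L u ≠ 0) :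
    ℓ u ≤ L ∧ (¬ Absorbing s0 s1 u → ℓ u = L) := by
  rw [branchCount] at h
  obtain ⟨b, hb⟩ := Finset.card_pos.mp (Nat.pos_of_ne_zero h)
  have hw := (Finset.mem_filter.mp hb).2
  constructor
  · rw [← hw]; exact walk_level_le s0 s1 ℓ hlev s hs _ L
  · intro hna
    rcases walk_level s0 s1 ℓ hlev s hs
        (fun j => if h : j < L then b ⟨j, h⟩ else false) L with hl | ha
    · rw [← hw]; exact hl
    · rw [← hw] at hna; exact absurd ha hna

lemma ball_level (i k : ℕ) :
    ℓ (ballConfig s0 s1 s i k).1 =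
      min k (absT s0 s1 ℓ hlev (s, sigmaAfter s0 s1 s i)) := by
  have h := level_iter s0 s1 ℓ hlev (s, sigmaAfter s0 s1 s i) k
  have h2 : ℓ ((s, sigmaAfter s0 s1 s i) : V × (V → Bool)).1 = 0 := hs
  rw [h2] at h
  simpa [ballConfig] using h

lemma ball_level_le {i k : ℕ} {u : V} (h : (ballConfig s0 s1 s i k).1 = u) :
    ℓ u ≤ k := by
  have := ball_level s0 s1 ℓ hlev s hs i k
  rw [h] at this
  omega

lemma ball_level_eq {i k : ℕ} {u : V} (h : (ballConfig s0 s1 s i k).1 = u)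
    (hu : ¬ Absorbing s0 s1 u) : ℓ u = k := by
  have h1 := ball_level s0 s1 ℓ hlev s hs i k
  rw [h] at h1
  have h2 : k < absT s0 s1 ℓ hlev (s, sigmaAfter s0 s1 s i) :=
    lt_absT_of_not_abs s0 s1 ℓ hlev (by rw [show ((stepD s0 s1)^[k]
      ((s, sigmaAfter s0 s1 s i) : V × (V → Bool))).1 = u from h]; exact hu)
  omega

lemma ball_abs_step {i k : ℕ} (h : Absorbing s0 s1 (ballConfig s0 s1 s i k).1) :
    (ballConfig s0 s1 s i (k + 1)).1 = (ballConfig s0 s1 s i k).1 := by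
  show ((stepD s0 s1)^[k+1] ((s, sigmaAfter s0 s1 s i) : V × (V → Bool))).1 = _
  rw [Function.iterate_succ_apply',
    stepD_of_abs s0 s1 (c := (stepD s0 s1)^[k] ((s, sigmaAfter s0 s1 s i) : V × (V → Bool))) h]
  rfl

lemma sigma_parity (u : V) (hu : ¬ Absorbing s0 s1 u) (i : ℕ) :
    (sigmaAfter s0 s1 s i u = true) ↔
      Odd (((Finset.range i).filter
        (fun j => (ballConfig s0 s1 s j (ℓ u)).1 = u)).card) := by
  induction i with
  | zero => simp [sigmaAfter, Nat.odd_iff]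
  | succ i ih =>
      have hbf := ballFinal_eq s0 s1 ℓ hlev s (sigmaAfter s0 s1 s i) u
      have hEnt : (∃ k, ((stepD s0 s1)^[k]
            ((s, sigmaAfter s0 s1 s i) : V × (V → Bool))).1 = u) ↔
          (ballConfig s0 s1 s i (ℓ u)).1 = u :=
        enters_iff s0 s1 ℓ hlev s (sigmaAfter s0 s1 s i) hs u
      show (ballFinal s0 s1 s (sigmaAfter s0 s1 s i) u = true) ↔ _
      rw [Finset.range_add_one, Finset.filter_insert]
      by_cases hE : (ballConfig s0 s1 s i (ℓ u)).1 = u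
      · rw [if_pos hE, Finset.card_insert_of_notMem (by simp), hbf,
          if_pos ⟨hEnt.mpr hE, hu⟩]
        rw [Nat.odd_iff] at ih ⊢
        rcases Bool.eq_false_or_eq_true (sigmaAfter s0 s1 s i u) with hx | hx
        · rw [hx] at ih ⊢
          simp at ih ⊢
          omega
        · rw [hx] at ih ⊢
          simp at ih ⊢
          omega
      · rw [if_neg hE, hbf, if_neg (fun hc => hE (hEnt.mp hc.1))]
        exact ih

lemma step_dir {u : V} {i : ℕ} (hu : ¬ Absorbing s0 s1 u)
    (hL : (ballConfig s0 s1 s i (ℓ u)).1 = u) :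
    (ballConfig s0 s1 s i (ℓ u + 1)).1 =
      (if sigmaAfter s0 s1 s i u then s1 u else s0 u) := by
  have hL' : ((stepD s0 s1)^[ℓ u] ((s, sigmaAfter s0 s1 s i) : V × (V → Bool))).1 = u := hL
  have hna : ¬ Absorbing s0 s1 (((stepD s0 s1)^[ℓ u]
      ((s, sigmaAfter s0 s1 s i) : V × (V → Bool))).1) := by
    rw [hL']; exact hu
  have hT : ℓ u < absT s0 s1 ℓ hlev (s, sigmaAfter s0 s1 s i) :=
    lt_absT_of_not_abs s0 s1 ℓ hlev hna
  have hsnd : ((stepD s0 s1)^[ℓ u]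
      ((s, sigmaAfter s0 s1 s i) : V × (V → Bool))).2 u = sigmaAfter s0 s1 s i u := by
    rw [iter_snd s0 s1 ℓ hlev _ u (ℓ u) (le_of_lt hT), if_neg]
    rintro ⟨j, hj, hju⟩
    have hlev2 := ball_level s0 s1 ℓ hlev s hs i j
    rw [show (ballConfig s0 s1 s i j).1 = u from hju] at hlev2
    omega
  show ((stepD s0 s1)^[ℓ u + 1] ((s, sigmaAfter s0 s1 s i) : V × (V → Bool))).1 = _
  rw [Function.iterate_succ_apply', stepD_of_not_abs s0 s1 hna]
  show (if ((stepD s0 s1)^[ℓ u] ((s, sigmaAfter s0 s1 s i) : V × (V → Bool))).2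
        (((stepD s0 s1)^[ℓ u] ((s, sigmaAfter s0 s1 s i) : V × (V → Bool))).1)
      then s1 (((stepD s0 s1)^[ℓ u] ((s, sigmaAfter s0 s1 s i) : V × (V → Bool))).1)
      else s0 (((stepD s0 s1)^[ℓ u] ((s, sigmaAfter s0 s1 s i) : V × (V → Bool))).1)) = _
  rw [hL', hsnd]

end Multi

/-- Ball counts in leveled switch graphs: if `ℓ` increases by `1` along every edge out
of a non-absorbing vertex, `ℓ s = 0`, and `2 ^ m` balls are released from `s`, then every
ball terminates, each ball enters each vertex at most once (positions repeat only once
absorbed), and each vertex `v` with `ℓ v ≤ m` is entered by exactly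
`2 ^ (m - ℓ v) * N(v)` balls. -/
theorem leveled_ball_counts [Fintype V] [DecidableEq V] (s0 s1 : V → V)
    (ℓ : V → ℕ)
    (hlev : ∀ v, ¬ Absorbing s0 s1 v → ℓ (s0 v) = ℓ v + 1 ∧ ℓ (s1 v) = ℓ v + 1)
    (s : V) (hs : ℓ s = 0) (m : ℕ) :
    (∀ i < 2 ^ m, ∃ k, Absorbing s0 s1 (ballConfig s0 s1 s i k).1) ∧
    (∀ i < 2 ^ m, ∀ k1 k2, k1 < k2 →
      (ballConfig s0 s1 s i k1).1 = (ballConfig s0 s1 s i k2).1 →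
      Absorbing s0 s1 (ballConfig s0 s1 s i k1).1) ∧
    (∀ v : V, ℓ v ≤ m →
      ((Finset.range (2 ^ m)).filter
        (fun i => ∃ k, (ballConfig s0 s1 s i k).1 = v)).card =
        2 ^ (m - ℓ v) * branchCount s0 s1 s (ℓ v) v) := by
  have hterm : ∀ i, ∃ k, Absorbing s0 s1 (ballConfig s0 s1 s i k).1 :=
    fun i => exists_abs s0 s1 ℓ hlev (s, sigmaAfter s0 s1 s i)
  refine ⟨fun i _ => hterm i,
    fun i _ k1 k2 h12 he =>
      pos_inj s0 s1 ℓ hlev ((s, sigmaAfter s0 s1 s i) : V × (V → Bool)) h12 he, ?_⟩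
  have main : ∀ L v, ℓ v = L → L ≤ m →
      ((Finset.range (2 ^ m)).filter
        (fun i => (ballConfig s0 s1 s i L).1 = v)).card
        = 2 ^ (m - L) * branchCount s0 s1 s L v := by
    intro L
    induction L with
    | zero =>
        intro v hv hLm
        by_cases hsv : s = v
        · subst hsv
          rw [branchCount_zero, if_pos rfl]
          have : Finset.filter (fun i => (ballConfig s0 s1 s i 0).1 = s)
              (Finset.range (2 ^ m)) = Finset.range (2 ^ m) :=
            Finset.filter_true_of_mem (fun i _ => rfl)
          rw [this]
          simp
        · rw [branchCount_zero, if_neg hsv]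
          have : Finset.filter (fun i => (ballConfig s0 s1 s i 0).1 = v)
              (Finset.range (2 ^ m)) = ∅ :=
            Finset.filter_false_of_mem (fun i _ h => hsv h)
          rw [this]
          simp
    | succ L ih =>
        intro v hv hLm
        have hml : m - L = (m - (L + 1)) + 1 := by omega
        rw [Finset.card_eq_sum_card_fiberwise
          (f := fun i => (ballConfig s0 s1 s i L).1) (t := Finset.univ)
          (fun i _ => Finset.mem_univ _),
          branchCount_succ, Finset.mul_sum]
        apply Finset.sum_congr rfl
        intro u _
        rw [Finset.filter_filter]
        -- helper: a ball at u at time L with absorbing u forces v = u, impossible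
        have habs : ∀ i, (ballConfig s0 s1 s i (L+1)).1 = v →
            (ballConfig s0 s1 s i L).1 = u → Absorbing s0 s1 u → False := by
          intro i h1 h2 hu
          have := ball_abs_step s0 s1 ℓ hlev s hs (i := i) (k := L) (by rw [h2]; exact hu)
          rw [h1, h2] at this
          have hle : ℓ u ≤ L := ball_level_le s0 s1 ℓ hlev s hs h2
          rw [← this] at hle
          omega
        by_cases hgood : ¬ Absorbing s0 s1 u ∧ ℓ u = L
        · obtain ⟨hu, hℓu⟩ := hgood
          have hdir : ∀ i, (ballConfig s0 s1 s i L).1 = u →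
              (ballConfig s0 s1 s i (L+1)).1 =
                (if sigmaAfter s0 s1 s i u then s1 u else s0 u) := by
            intro i hiu
            have := step_dir s0 s1 ℓ hlev s hs hu (by rw [hℓu]; exact hiu)
            rwa [hℓu] at this
          have hsig : ∀ i, (sigmaAfter s0 s1 s i u = true) ↔
              Odd (((Finset.range i).filter
                (fun j => (ballConfig s0 s1 s j L).1 = u)).card) := by
            intro i
            have := sigma_parity s0 s1 ℓ hlev s hs u hu i
            rwa [hℓu] at this
          have hcard := ih u hℓu (by omega)
          have hEfilt : ∀ i, i < 2 ^ m →
              ((Finset.range (2 ^ m)).filter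
                (fun j => (ballConfig s0 s1 s j L).1 = u)).filter (fun j => j < i)
              = (Finset.range i).filter (fun j => (ballConfig s0 s1 s j L).1 = u) := by
            intro i hi
            ext j
            simp only [Finset.mem_filter, Finset.mem_range]
            constructor
            · rintro ⟨⟨hj2, hP⟩, hji⟩; exact ⟨hji, hP⟩
            · rintro ⟨hji, hP⟩; exact ⟨⟨by omega, hP⟩, hji⟩
          have h2c : 2 ^ (m - L) * branchCount s0 s1 s L u
              = 2 * (2 ^ (m - (L+1)) * branchCount s0 s1 s L u) := by
            rw [hml, pow_succ]; ring
          by_cases h0 : s0 u = v <;> by_cases h1 : s1 u = v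
          · -- both edges hit v
            have hfe : (Finset.range (2 ^ m)).filter
                (fun i => (ballConfig s0 s1 s i (L+1)).1 = v ∧
                  (ballConfig s0 s1 s i L).1 = u)
                = (Finset.range (2 ^ m)).filter
                    (fun i => (ballConfig s0 s1 s i L).1 = u) := by
              apply Finset.filter_congr
              intro i _
              constructor
              · exact fun h => h.2
              · intro h
                refine ⟨?_, h⟩
                rw [hdir i h]
                cases sigmaAfter s0 s1 s i u <;> simp [h0, h1]
            rw [hfe, hcard, if_pos h0, if_pos h1, h2c]
            ring
          · -- only s0 hits v : even parity balls
            have hfe : (Finset.range (2 ^ m)).filter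
                (fun i => (ballConfig s0 s1 s i (L+1)).1 = v ∧
                  (ballConfig s0 s1 s i L).1 = u)
                = ((Finset.range (2 ^ m)).filter
                    (fun j => (ballConfig s0 s1 s j L).1 = u)).filter
                    (fun i => Even ((((Finset.range (2 ^ m)).filter
                      (fun j => (ballConfig s0 s1 s j L).1 = u)).filter
                        (fun j => j < i)).card)) := by
              ext i
              simp only [Finset.mem_filter, Finset.mem_range]
              constructor
              · rintro ⟨hi, hv', hu'⟩
                refine ⟨⟨hi, hu'⟩, ?_⟩
                have := hEfilt i hi
                rw [this]
                rw [hdir i hu'] at hv'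
                rw [← Nat.not_odd_iff_even]
                intro hodd
                have hσ : sigmaAfter s0 s1 s i u = true := (hsig i).mpr hodd
                rw [hσ] at hv'
                simp at hv'
                exact h1 hv'
              · rintro ⟨⟨hi, hu'⟩, hev⟩
                refine ⟨hi, ?_, hu'⟩
                rw [hEfilt i hi] at hev
                have hσ : sigmaAfter s0 s1 s i u = false := by
                  rcases Bool.eq_false_or_eq_true (sigmaAfter s0 s1 s i u) with hx | hx
                  · exact absurd ((hsig i).mp hx) (Nat.not_odd_iff_even.mpr hev)
                  · exact hx
                rw [hdir i hu', hσ]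
                simpa using h0
            rw [hfe, count_even_index, hcard, if_pos h0, if_neg h1, h2c]
            have hr : 2 ^ (m - (L+1)) * (branchCount s0 s1 s L u * (1 + 0))
                = 2 ^ (m - (L+1)) * branchCount s0 s1 s L u := by ring
            rw [hr]
            generalize (2 ^ (m - (L+1)) * branchCount s0 s1 s L u) = c
            omega
          · -- only s1 hits v : odd parity balls
            have hfe : (Finset.range (2 ^ m)).filter
                (fun i => (ballConfig s0 s1 s i (L+1)).1 = v ∧
                  (ballConfig s0 s1 s i L).1 = u)
                = ((Finset.range (2 ^ m)).filter
                    (fun j => (ballConfig s0 s1 s j L).1 = u)).filter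
                    (fun i => ¬ Even ((((Finset.range (2 ^ m)).filter
                      (fun j => (ballConfig s0 s1 s j L).1 = u)).filter
                        (fun j => j < i)).card)) := by
              ext i
              simp only [Finset.mem_filter, Finset.mem_range]
              constructor
              · rintro ⟨hi, hv', hu'⟩
                refine ⟨⟨hi, hu'⟩, ?_⟩
                rw [hEfilt i hi]
                rw [hdir i hu'] at hv'
                rcases Bool.eq_false_or_eq_true (sigmaAfter s0 s1 s i u) with hx | hx
                · rw [← Nat.not_odd_iff_even]
                  intro hcon
                  exact hcon ((hsig i).mp hx)
                · rw [hx] at hv'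
                  simp at hv'
                  exact absurd hv' h0
              · rintro ⟨⟨hi, hu'⟩, hev⟩
                refine ⟨hi, ?_, hu'⟩
                rw [hEfilt i hi] at hev
                have hσ : sigmaAfter s0 s1 s i u = true :=
                  (hsig i).mpr (Nat.not_even_iff_odd.mp (fun h => hev h))
                rw [hdir i hu', hσ]
                simpa using h1
            rw [hfe, count_odd_index, hcard, if_neg h0, if_pos h1, h2c]
            have hr : 2 ^ (m - (L+1)) * (branchCount s0 s1 s L u * (0 + 1))
                = 2 ^ (m - (L+1)) * branchCount s0 s1 s L u := by ring
            rw [hr]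
            generalize (2 ^ (m - (L+1)) * branchCount s0 s1 s L u) = c
            omega
          · -- neither edge hits v : empty fiber
            rw [Finset.filter_false_of_mem, if_neg h0, if_neg h1]
            · simp
            · rintro i hi ⟨hv', hu'⟩
              rw [hdir i hu'] at hv'
              rcases Bool.eq_false_or_eq_true (sigmaAfter s0 s1 s i u) with hx | hx <;>
                rw [hx] at hv' <;> simp at hv'
              · exact h1 hv'
              · exact h0 hv'
        · -- bad u : fiber empty and branchCount vanishes (or edges miss v)
          have hfe : (Finset.range (2 ^ m)).filter
              (fun i => (ballConfig s0 s1 s i (L+1)).1 = v ∧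
                (ballConfig s0 s1 s i L).1 = u) = ∅ := by
            apply Finset.filter_false_of_mem
            rintro i hi ⟨hv', hu'⟩
            by_cases hau : Absorbing s0 s1 u
            · exact habs i hv' hu' hau
            · exact hgood ⟨hau, ball_level_eq s0 s1 ℓ hlev s hs hu' hau⟩
          rw [hfe]
          have hN : branchCount s0 s1 s L u *
              ((if s0 u = v then 1 else 0) + (if s1 u = v then 1 else 0)) = 0 := by
            by_cases hd : s0 u = v ∨ s1 u = v
            · have hbz : branchCount s0 s1 s L u = 0 := by
                by_contra hnz
                obtain ⟨hle, heq⟩ := branchCount_level s0 s1 ℓ hlev s hs hnz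
                by_cases hau : Absorbing s0 s1 u
                · have hvu : v = u := by
                    rcases hd with h | h
                    · rw [← h, hau.1]
                    · rw [← h, hau.2]
                  rw [hvu] at hv
                  omega
                · exact hgood ⟨hau, heq hau⟩
              rw [hbz, zero_mul]
            · push_neg at hd
              rw [if_neg hd.1, if_neg hd.2]
              simp
          rw [hN, mul_zero]
          simp
  intro v hvm
  have hfe : (Finset.range (2 ^ m)).filter
      (fun i => ∃ k, (ballConfig s0 s1 s i k).1 = v)
      = (Finset.range (2 ^ m)).filter
          (fun i => (ballConfig s0 s1 s i (ℓ v)).1 = v) := by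
    apply Finset.filter_congr
    intro i _
    exact enters_iff s0 s1 ℓ hlev s (sigmaAfter s0 s1 s i) hs v
  rw [hfe]
  exact main (ℓ v) v rfl hvm
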